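/- Two vertices v, w of a staged tree are in the same stage (i.e. their corresponding emanating edges have identified labels θ(v,v_i) = θ(w,w_i) for all i) if and only if the odds-ratio equations p_{[v_i]}·p_{[w]} = p_{[w_i]}·p_{[v]} hold for all i, where v_i and w_i are the children of v and w connected by edges with the same label index. -/
import Mathlib


inductive PTree (α : Type) : Type
  | leaf : PTree α
  | node : List (α × PTree α) → PTree α

namespace PTree

variable {α : Type} {R : Type} [CommRing R]

mutual
/-- list of (index-path, product of labels) over all root-to-leaf paths. -/
def leafData (f : α → R) : PTree α → List (List ℕ × R)
  | .leaf => [([], 1)]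
  | .node cs => leafDataAux f 0 cs
def leafDataAux (f : α → R) : ℕ → List (α × PTree α) → List (List ℕ × R)
  | _, [] => []
  | i, c :: cs =>
      ((leafData f c.2).map fun p => (i :: p.1, f c.1 * p.2)) ++ leafDataAux f (i + 1) cs
end

/-- the subtree rooted at the vertex given by an index path. -/
def subtreeAt : PTree α → List ℕ → Option (PTree α)
  | T, [] => some T
  | .leaf, _ :: _ => none
  | .node cs, i :: is =>
      match cs[i]? with
      | some c => subtreeAt c.2 is
      | none => none

/-- product of the labels along the root-to-v path. -/
def pathProd (f : α → R) : PTree α → List ℕ → Option R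
  | _, [] => some 1
  | .leaf, _ :: _ => none
  | .node cs, i :: is =>
      match cs[i]? with
      | some c => (pathProd f c.2 is).map (f c.1 * ·)
      | none => none

/-- p_{[v]} : sum of atomic probabilities of root-to-leaf paths through v. -/
def pSub (f : α → R) (T : PTree α) (v : List ℕ) : R :=
  (((leafData f T).filter fun p => v.isPrefixOf p.1).map Prod.snd).sum

/-- t(T) : sum of the products of labels over all root-to-leaf paths of T. -/
def tPoly (f : α → R) (T : PTree α) : R :=
  ((leafData f T).map Prod.snd).sum

mutual
/-- a probability tree: every vertex has no or ≥ 2 children, labels in (0,1) summing to one. -/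
def valid : PTree ℝ → Prop
  | .leaf => True
  | .node cs => 2 ≤ cs.length ∧ (cs.map Prod.fst).sum = 1 ∧ validAux cs
def validAux : List (ℝ × PTree ℝ) → Prop
  | [] => True
  | c :: cs => (0 < c.1 ∧ c.1 < 1 ∧ valid c.2) ∧ validAux cs
end

mutual
/-- local sum-to-one conditions hold at every vertex. -/
def sumToOne : PTree ℝ → Prop
  | .leaf => True
  | .node cs => (cs.map Prod.fst).sum = 1 ∧ sumToOneAux cs
def sumToOneAux : List (ℝ × PTree ℝ) → Prop
  | [] => True
  | c :: cs => sumToOne c.2 ∧ sumToOneAux cs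
end

end PTree

namespace PTree

variable {α : Type} {R : Type} [CommRing R]

lemma leafDataAux_fst_head (f : α → R) :
    ∀ (cs : List (α × PTree α)) (n : ℕ) (p : List ℕ × R), p ∈ leafDataAux f n cs →
      ∃ j l, p.1 = j :: l ∧ n ≤ j := by
  intro cs
  induction cs with
  | nil => intro n p hp; rw [leafDataAux] at hp; simp at hp
  | cons c cs ih =>
    intro n p hp
    rw [leafDataAux] at hp
    rcases List.mem_append.1 hp with hp | hp
    · obtain ⟨q, hq, rfl⟩ := List.mem_map.1 hp
      exact ⟨n, q.1, rfl, le_refl n⟩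
    · obtain ⟨j, l, h1, h2⟩ := ih (n+1) p hp
      exact ⟨j, l, h1, by omega⟩

lemma filter_leafDataAux (f : α → R) (is : List ℕ) :
    ∀ (cs : List (α × PTree α)) (n i : ℕ),
    (((leafDataAux f n cs).filter fun p => ((n + i) :: is).isPrefixOf p.1).map Prod.snd).sum =
      match cs[i]? with
      | some c => f c.1 * pSub f c.2 is
      | none => 0 := by
  intro cs
  induction cs with
  | nil => intro n i; rw [leafDataAux]; simp
  | cons c cs ih =>
    intro n i
    rw [leafDataAux, List.filter_append, List.map_append, List.sum_append]
    cases i with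
    | zero =>
      have hblock :
          ((((leafData f c.2).map fun p => (n :: p.1, f c.1 * p.2)).filter
              fun p => ((n + 0) :: is).isPrefixOf p.1).map Prod.snd).sum =
            f c.1 * pSub f c.2 is := by
        rw [List.filter_map]
        have hpred : ((fun p : List ℕ × R => ((n + 0) :: is).isPrefixOf p.1) ∘
            fun p : List ℕ × R => (n :: p.1, f c.1 * p.2)) =
            fun p : List ℕ × R => is.isPrefixOf p.1 := by
          funext p; simp [List.isPrefixOf]
        rw [hpred, List.map_map, pSub]
        have : (Prod.snd ∘ fun p : List ℕ × R => (n :: p.1, f c.1 * p.2)) =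
            fun p : List ℕ × R => f c.1 * p.2 := by funext p; rfl
        rw [this]
        induction ((leafData f c.2).filter fun p => is.isPrefixOf p.1) with
        | nil => simp
        | cons a l ihl => simp [ihl, mul_add]
      have htail :
          ((leafDataAux f (n+1) cs).filter fun p => ((n + 0) :: is).isPrefixOf p.1) = [] := by
        apply List.filter_eq_nil_iff.2
        intro p hp
        obtain ⟨j, l, h1, h2⟩ := leafDataAux_fst_head f cs (n+1) p hp
        rw [h1]
        simp only [List.isPrefixOf]
        have hne : (n + 0 == j) = false := by
          rw [beq_eq_false_iff_ne]; omega
        rw [hne, Bool.false_and]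
        simp
      rw [hblock, htail]
      simp
    | succ i =>
      have hblock :
          ((((leafData f c.2).map fun p => (n :: p.1, f c.1 * p.2)).filter
              fun p => ((n + (i+1)) :: is).isPrefixOf p.1) : List (List ℕ × R)) = [] := by
        apply List.filter_eq_nil_iff.2
        intro p hp
        obtain ⟨q, hq, rfl⟩ := List.mem_map.1 hp
        simp only [List.isPrefixOf]
        have hne : (n + (i + 1) == n) = false := by
          rw [beq_eq_false_iff_ne]; omega
        rw [hne, Bool.false_and]
        simp
      have htail := ih (n+1) i
      have harith : n + 1 + i = n + (i + 1) := by omega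
      rw [harith] at htail
      rw [hblock, htail]
      simp

lemma pSub_node (f : α → R) (cs : List (α × PTree α)) (i : ℕ) (is : List ℕ) :
    pSub f (.node cs) (i :: is) =
      match cs[i]? with
      | some c => f c.1 * pSub f c.2 is
      | none => 0 := by
  rw [pSub, leafData]
  have := filter_leafDataAux f is cs 0 i
  simpa using this

lemma pSub_nil (f : α → R) (T : PTree α) : pSub f T [] = tPoly f T := by
  rw [pSub, tPoly]
  have : (leafData f T).filter (fun p => ([] : List ℕ).isPrefixOf p.1) = leafData f T :=
    List.filter_eq_self.2 (fun p _ => by simp [List.isPrefixOf])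
  rw [this]

lemma tPoly_node_aux (f : α → R) :
    ∀ (cs : List (α × PTree α)) (n : ℕ),
    ((leafDataAux f n cs).map Prod.snd).sum = (cs.map fun c => f c.1 * tPoly f c.2).sum := by
  intro cs
  induction cs with
  | nil => intro n; rw [leafDataAux]; simp
  | cons c cs ih =>
    intro n
    rw [leafDataAux, List.map_append, List.sum_append, ih (n+1)]
    simp only [List.map_cons, List.sum_cons, List.map_map]
    congr 1
    rw [tPoly]
    have : (Prod.snd ∘ fun p : List ℕ × R => (n :: p.1, f c.1 * p.2)) =
        fun p : List ℕ × R => f c.1 * p.2 := by funext p; rfl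
    rw [this]
    induction (leafData f c.2) with
    | nil => simp
    | cons a l ihl => simp [ihl, mul_add]

lemma tPoly_node (f : α → R) (cs : List (α × PTree α)) :
    tPoly f (.node cs) = (cs.map fun c => f c.1 * tPoly f c.2).sum := by
  rw [tPoly, leafData]; exact tPoly_node_aux f cs 0

lemma pSub_append (f : α → R) :
    ∀ (v : List ℕ) (T S : PTree α), subtreeAt T v = some S →
      ∃ q, pathProd f T v = some q ∧ ∀ l, pSub f T (v ++ l) = q * pSub f S l := by
  intro v
  induction v with
  | nil =>
    intro T S h
    rw [subtreeAt] at h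
    cases h
    exact ⟨1, by rw [pathProd], fun l => by simp⟩
  | cons i is ih =>
    intro T S h
    cases T with
    | leaf => rw [subtreeAt] at h; cases h
    | node cs =>
      rw [subtreeAt] at h
      cases hc : cs[i]? with
      | none => rw [hc] at h; cases h
      | some c =>
        rw [hc] at h
        have h' : subtreeAt c.2 is = some S := h
        obtain ⟨q, hq, hall⟩ := ih c.2 S h'
        refine ⟨f c.1 * q, ?_, ?_⟩
        · rw [pathProd, hc]
          show Option.map (fun x => f c.1 * x) (pathProd f c.2 is) = some (f c.1 * q)
          rw [hq]; rfl
        · intro l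
          rw [List.cons_append, pSub_node, hc]
          show f c.1 * pSub f c.2 (is ++ l) = f c.1 * q * pSub f S l
          rw [hall l, mul_assoc]

lemma validAux_mem : ∀ (cs : List (ℝ × PTree ℝ)) (c : ℝ × PTree ℝ), validAux cs → c ∈ cs →
    0 < c.1 ∧ valid c.2 := by
  intro cs
  induction cs with
  | nil => intro c _ hc; simp at hc
  | cons a cs ih =>
    intro c h hc
    rw [validAux] at h
    rcases List.mem_cons.1 hc with rfl | hc
    · exact ⟨h.1.1, h.1.2.2⟩
    · exact ih c h.2 hc

mutual
theorem tPoly_eq_one : ∀ (T : PTree ℝ), valid T → tPoly id T = 1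
  | .leaf, _ => by rw [tPoly, leafData]; simp
  | .node cs, h => by
      rw [tPoly_node, tPoly_eq_one_aux cs (by rw [valid] at h; exact h.2.2)]
      rw [valid] at h; exact h.2.1
theorem tPoly_eq_one_aux : ∀ (cs : List (ℝ × PTree ℝ)), validAux cs →
    (cs.map fun c => id c.1 * tPoly id c.2).sum = (cs.map Prod.fst).sum
  | [], _ => rfl
  | c :: cs, h => by
      rw [validAux] at h
      simp only [List.map_cons, List.sum_cons]
      rw [tPoly_eq_one c.2 h.1.2.2, tPoly_eq_one_aux cs h.2]
      simp
end

lemma valid_subtreeAt : ∀ (v : List ℕ) (T S : PTree ℝ), valid T → subtreeAt T v = some S →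
    valid S := by
  intro v
  induction v with
  | nil => intro T S h hs; rw [subtreeAt] at hs; cases hs; exact h
  | cons i is ih =>
    intro T S h hs
    cases T with
    | leaf => rw [subtreeAt] at hs; cases hs
    | node cs =>
      rw [subtreeAt] at hs
      cases hc : cs[i]? with
      | none => rw [hc] at hs; cases hs
      | some c =>
        rw [hc] at hs
        have hs' : subtreeAt c.2 is = some S := hs
        rw [valid] at h
        have hm : c ∈ cs := by
          have := List.getElem?_eq_some_iff.1 hc
          obtain ⟨hlt, he⟩ := this
          exact he ▸ List.getElem_mem hlt
        exact ih c.2 S (validAux_mem cs c h.2.2 hm).2 hs'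

lemma pathProd_pos : ∀ (v : List ℕ) (T : PTree ℝ) (q : ℝ), valid T →
    pathProd id T v = some q → 0 < q := by
  intro v
  induction v with
  | nil => intro T q _ h; rw [pathProd] at h; cases h; exact one_pos
  | cons i is ih =>
    intro T q h hq
    cases T with
    | leaf => rw [pathProd] at hq; cases hq
    | node cs =>
      rw [pathProd] at hq
      cases hc : cs[i]? with
      | none => rw [hc] at hq; cases hq
      | some c =>
        rw [hc] at hq
        have hq2 : Option.map (fun x => c.1 * x) (pathProd id c.2 is) = some q := hq
        cases hq' : pathProd id c.2 is with
        | none => rw [hq'] at hq2; cases hq2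
        | some q' =>
          rw [hq'] at hq2
          simp only [Option.map_some] at hq2
          cases hq2
          rw [valid] at h
          have hm : c ∈ cs := by
            have := List.getElem?_eq_some_iff.1 hc
            obtain ⟨hlt, he⟩ := this
            exact he ▸ List.getElem_mem hlt
          obtain ⟨hc1, hc2⟩ := validAux_mem cs c h.2.2 hm
          exact mul_pos hc1 (ih c.2 q' hc2 hq')

end PTree

open PTree in
/-- two vertices `v, w` of a staged tree are in the same stage (their
corresponding emanating edges have identified labels) if and only if the odds-ratio
equations `p_{[v_i]}·p_{[w]} = p_{[w_i]}·p_{[v]}` hold for all matched children. -/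
theorem sameStage_iff_oddsRatios (T : PTree ℝ) (hT : PTree.valid T) (v w : List ℕ)
    (csv csw : List (ℝ × PTree ℝ))
    (hv : PTree.subtreeAt T v = some (PTree.node csv))
    (hw : PTree.subtreeAt T w = some (PTree.node csw))
    (hk : csv.length = csw.length) :
    csv.map Prod.fst = csw.map Prod.fst ↔
      ∀ i < csv.length,
        PTree.pSub (id : ℝ → ℝ) T (v ++ [i]) * PTree.pSub (id : ℝ → ℝ) T w =
        PTree.pSub (id : ℝ → ℝ) T (w ++ [i]) * PTree.pSub (id : ℝ → ℝ) T v := by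
  obtain ⟨qv, hqv, hv'⟩ := PTree.pSub_append id v T _ hv
  obtain ⟨qw, hqw, hw'⟩ := PTree.pSub_append id w T _ hw
  have hVv : PTree.valid (.node csv) := PTree.valid_subtreeAt v T _ hT hv
  have hVw : PTree.valid (.node csw) := PTree.valid_subtreeAt w T _ hT hw
  have hqvpos := PTree.pathProd_pos v T qv hT hqv
  have hqwpos := PTree.pathProd_pos w T qw hT hqw
  have hchild : ∀ (cs : List (ℝ × PTree ℝ)), PTree.valid (.node cs) →
      ∀ (i : ℕ) (hi : i < cs.length), PTree.pSub id (PTree.node cs) [i] = cs[i].1 := by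
    intro cs h i hi
    rw [PTree.pSub_node, List.getElem?_eq_getElem hi]
    rw [PTree.valid] at h
    have hm : cs[i] ∈ cs := List.getElem_mem hi
    have hvc := (PTree.validAux_mem cs _ h.2.2 hm).2
    show id (cs[i].1) * PTree.pSub id (cs[i].2) [] = cs[i].1
    rw [PTree.pSub_nil, PTree.tPoly_eq_one _ hvc]
    simp
  have hpv : PTree.pSub id T v = qv := by
    have := hv' []
    rw [List.append_nil, PTree.pSub_nil, PTree.tPoly_eq_one _ hVv] at this
    simpa using this
  have hpw : PTree.pSub id T w = qw := by
    have := hw' []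
    rw [List.append_nil, PTree.pSub_nil, PTree.tPoly_eq_one _ hVw] at this
    simpa using this
  have hpvi : ∀ (i : ℕ) (hi : i < csv.length),
      PTree.pSub id T (v ++ [i]) = qv * (csv[i]'hi).1 := by
    intro i hi
    rw [hv' [i], hchild csv hVv i hi]
  have hpwi : ∀ (i : ℕ) (hi : i < csw.length),
      PTree.pSub id T (w ++ [i]) = qw * (csw[i]'hi).1 := by
    intro i hi
    rw [hw' [i], hchild csw hVw i hi]
  have key : ∀ a b : ℝ, (qv * a * qw = qw * b * qv ↔ a = b) := by
    intro a b
    constructor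
    · intro h
      have h2 : a * (qv * qw) = b * (qv * qw) := by linear_combination h
      exact mul_right_cancel₀ (by positivity) h2
    · rintro rfl; ring
  constructor
  · intro h i hi
    have hi' : i < csw.length := hk ▸ hi
    rw [hpvi i hi, hpwi i hi', hpv, hpw, key]
    have h1 : (csv.map Prod.fst)[i]? = (csw.map Prod.fst)[i]? := by rw [h]
    rw [List.getElem?_map, List.getElem?_map, List.getElem?_eq_getElem hi,
      List.getElem?_eq_getElem hi'] at h1
    simpa using h1
  · intro h
    apply List.ext_getElem (by simp [hk])
    intro i hi1 hi2
    have hi : i < csv.length := by simpa using hi1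
    have hi' : i < csw.length := hk ▸ hi
    have := h i hi
    rw [hpvi i hi, hpwi i hi', hpv, hpw, key] at this
    simpa using this
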